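/- Let N be large enough and let X_ℓ, X_r ⊆ {1,…,N} be disjoint subsets with ℓ ∈ X_ℓ and r ∈ X_r, where ℓ ≠ r. There do NOT exist self-adjoint operators A supported on X_ℓ and B supported on X_r such that (i/2)(n_ℓ − n_r)|W⟩ = (A + B)|W⟩. (Hence the boundary action of the truncated imaginary hopping on the W state cannot be realized by Hermitian boundary operators.) -/

import Mathlib

open scoped BigOperators

noncomputable section

/-- Configurations of `N` qubits. -/
abbrev Cfg (N : ℕ) := Fin N → Fin 2

/-- The `N`-qubit Hilbert space `⊗_{j=1}^N ℂ²`, identified with `ℂ^(Fin N → Fin 2)`. -/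
abbrev QS (N : ℕ) := EuclideanSpace ℂ (Cfg N)

/-- Computational basis state `|t⟩`. -/
def ket {N : ℕ} (t : Cfg N) : QS N := EuclideanSpace.single t 1

/-- Configuration with a single `1` at site `j`. -/
def eConf {N : ℕ} (j : Fin N) : Cfg N := fun k => if k = j then 1 else 0

/-- The all-zero product state `|0̄⟩`. -/
def zeroKet (N : ℕ) : QS N := ket (fun _ => 0)

/-- The W state `|W⟩ = (1/√N) ∑_j |e_j⟩`. -/
def Wst (N : ℕ) : QS N := (Real.sqrt N : ℂ)⁻¹ • ∑ j : Fin N, ket (eConf j)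

/-- Hilbert space of the qubits in a subregion `A ⊆ {1,…,N}`. -/
abbrev QSOn {N : ℕ} (A : Finset (Fin N)) := EuclideanSpace ℂ (↥A → Fin 2)

/-- Computational basis state on subregion `A`. -/
def ketOn {N : ℕ} (A : Finset (Fin N)) (t : ↥A → Fin 2) : QSOn A := EuclideanSpace.single t 1

/-- All-zero state `|0̄⟩_A` on subregion `A`. -/
def zeroOn {N : ℕ} (A : Finset (Fin N)) : QSOn A := ketOn A (fun _ => 0)

/-- W state `|W⟩_A = (1/√|A|) ∑_{j∈A} |e_j⟩_A` on subregion `A`. -/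
def WOn {N : ℕ} (A : Finset (Fin N)) : QSOn A :=
  (Real.sqrt A.card : ℂ)⁻¹ • ∑ j : ↥A, ketOn A (fun k => if k = j then 1 else 0)

/-- Tensor product of a state on `X` with a state on `Xᶜ`, realized in the full `N`-qubit
space via the factorization of basis configurations. -/
def tens {N : ℕ} (X : Finset (Fin N)) (f : QSOn X) (g : QSOn Xᶜ) : QS N :=
  WithLp.toLp 2 (fun (s : Cfg N) => f (fun j => s j.1) * g (fun j => s j.1))

/-- Combine a configuration on `X` and one on `Xᶜ` into a full configuration. -/
def mergeCfg {N : ℕ} (X : Finset (Fin N)) (x : ↥X → Fin 2) (y : ↥(Xᶜ) → Fin 2) : Cfg N :=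
  fun k => if h : k ∈ X then x ⟨k, h⟩ else y ⟨k, Finset.mem_compl.mpr h⟩

/-- Hard-core boson creation operator `s_j† = |1⟩⟨0|` acting at site `j`. -/
def aDag {N : ℕ} (j : Fin N) : QS N →ₗ[ℂ] QS N where
  toFun ψ := WithLp.toLp 2 (fun s => if s j = 1 then ψ (Function.update s j 0) else 0)
  map_add' ψ φ := by apply PiLp.ext; intro s; by_cases h : s j = 1 <;> simp [h]
  map_smul' c ψ := by apply PiLp.ext; intro s; by_cases h : s j = 1 <;> simp [h]

/-- Hard-core boson annihilation operator `s_j = |0⟩⟨1|` acting at site `j`. -/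
def aOp {N : ℕ} (j : Fin N) : QS N →ₗ[ℂ] QS N where
  toFun ψ := WithLp.toLp 2 (fun s => if s j = 0 then ψ (Function.update s j 1) else 0)
  map_add' ψ φ := by apply PiLp.ext; intro s; by_cases h : s j = 0 <;> simp [h]
  map_smul' c ψ := by apply PiLp.ext; intro s; by_cases h : s j = 0 <;> simp [h]

/-- Number operator `n_j = s_j† s_j = |1⟩⟨1|_j`. -/
def nOp {N : ℕ} (j : Fin N) : QS N →ₗ[ℂ] QS N := aDag j ∘ₗ aOp j

/-- The imaginary-hopping Hamiltonian
`H_ImHop = (i/2) ∑_{j=1}^N (s_j† s_{j+1} − s_{j+1}† s_j)` on the periodic chain. -/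
def HImHop (N : ℕ) [NeZero N] : QS N →ₗ[ℂ] QS N :=
  (Complex.I / 2) • ∑ j : Fin N, (aDag j ∘ₗ aOp (j + 1) - aDag (j + 1) ∘ₗ aOp j)

/-- `g` is supported on `X`: it acts as `gX ⊗ Id_{Xᶜ}` for some operator `gX` on `H_X`. -/
def SupportedOn {N : ℕ} (X : Finset (Fin N)) (g : QS N →ₗ[ℂ] QS N) : Prop :=
  ∃ gX : QSOn X →ₗ[ℂ] QSOn X, ∀ (ψ : QS N) (s : Cfg N),
    g ψ s
      = gX (WithLp.toLp 2 (fun x : ↥X → Fin 2 => ψ (mergeCfg X x (fun j : ↥(Xᶜ) => s j.1))))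
          (fun j : ↥X => s j.1)

/-! Pair both sides with `φ := unnormalizedW X_ℓ = ∑_{j ∈ X_ℓ} |e_j⟩ = √|X_ℓ| |W⟩_{X_ℓ} ⊗ |0̄⟩`.
On the left, `n_r` vanishes on these `|e_j⟩` and `n_ℓ` keeps only `|e_ℓ⟩`, which gives the nonzero
imaginary number `(i/2)/√N`. On the right, locality of `A` gives `⟨φ, A W⟩ = ⟨φ, A φ⟩/√N`, and since
every `e_j` with `j ∈ X_ℓ` is the zero configuration on `X_r`, `⟨φ, B W⟩ = |X_ℓ| ⟨0̄, B 0̄⟩/√N`;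
both are real because `A` and `B` are self-adjoint. -/

variable {N : ℕ}

lemma ket_apply (t s : Cfg N) : ket t s = if s = t then 1 else 0 :=
  PiLp.single_apply 2 ℂ t 1 s

lemma eConf_apply_eq_one_iff (j k : Fin N) : eConf j k = 1 ↔ k = j := by
  by_cases h : k = j <;> simp [eConf, h]

lemma eConf_injective : Function.Injective (eConf (N := N)) := fun j k h =>
  ((eConf_apply_eq_one_iff k j).1 (congrFun h j ▸ (eConf_apply_eq_one_iff j j).2 rfl))

lemma mergeCfg_apply_of_mem (X : Finset (Fin N)) (x : ↥X → Fin 2) (y : ↥Xᶜ → Fin 2)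
    {k : Fin N} (hk : k ∈ X) : mergeCfg X x y k = x ⟨k, hk⟩ := dif_pos hk

lemma mergeCfg_apply_of_notMem (X : Finset (Fin N)) (x : ↥X → Fin 2) (y : ↥Xᶜ → Fin 2)
    {k : Fin N} (hk : k ∉ X) : mergeCfg X x y k = y ⟨k, Finset.mem_compl.mpr hk⟩ := dif_neg hk

lemma mergeCfg_restrict (X : Finset (Fin N)) (s : Cfg N) :
    mergeCfg X (fun i => s i) (fun i => s i) = s := funext fun k => by
  by_cases hk : k ∈ X
  · rw [mergeCfg_apply_of_mem X _ _ hk]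
  · rw [mergeCfg_apply_of_notMem X _ _ hk]

lemma mergeCfg_eq_iff (X : Finset (Fin N)) (x : ↥X → Fin 2) (y : ↥Xᶜ → Fin 2) (s : Cfg N) :
    mergeCfg X x y = s ↔ x = (fun i : ↥X => s i) ∧ y = fun i : ↥Xᶜ => s i := by
  constructor
  · rintro rfl
    exact ⟨funext fun i => (mergeCfg_apply_of_mem X x y i.2).symm,
      funext fun i => (mergeCfg_apply_of_notMem X x y (Finset.mem_compl.1 i.2)).symm⟩
  · rintro ⟨rfl, rfl⟩
    exact mergeCfg_restrict X s

lemma exists_eq_eConf_iff_of_apply_eq_one {s : Cfg N} {j : Fin N} (hj : s j = 1) :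
    (∃ k, s = eConf k) ↔ s = eConf j := by
  refine ⟨fun ⟨k, hk⟩ => ?_, fun h => ⟨j, h⟩⟩
  rwa [(eConf_apply_eq_one_iff k j).1 (hk ▸ hj)]

lemma exists_mem_eq_eConf_iff {X : Finset (Fin N)} {s : Cfg N} (hs : ∀ k ∉ X, s k = 0) :
    (∃ k ∈ X, s = eConf k) ↔ ∃ k, s = eConf k := by
  refine ⟨fun ⟨k, _, hk⟩ => ⟨k, hk⟩, fun ⟨k, hk⟩ => ⟨k, ?_, hk⟩⟩
  by_contra hkX
  simpa [hk, eConf] using hs k hkX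

def unnormalizedW (X : Finset (Fin N)) : QS N := ∑ j ∈ X, ket (eConf j)

lemma unnormalizedW_apply (X : Finset (Fin N)) (s : Cfg N) :
    unnormalizedW X s = if ∃ k ∈ X, s = eConf k then 1 else 0 := by
  simp only [unnormalizedW, WithLp.ofLp_sum, Finset.sum_apply, ket_apply]
  split_ifs with h
  · obtain ⟨k, hk, rfl⟩ := h
    rw [Finset.sum_eq_single_of_mem k hk
      fun j _ hjk => if_neg fun h => hjk (eConf_injective h).symm, if_pos rfl]
  · exact Finset.sum_eq_zero fun k hk => if_neg fun h' => h ⟨k, hk, h'⟩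

lemma Wst_apply (s : Cfg N) :
    Wst N s = (Real.sqrt N : ℂ)⁻¹ * if ∃ k, s = eConf k then 1 else 0 := by
  change ((Real.sqrt N : ℂ)⁻¹ • unnormalizedW Finset.univ) s = _
  simp [unnormalizedW_apply]

lemma inner_ket_left (t : Cfg N) (v : QS N) : inner ℂ (ket t) v = v t := by
  simp [ket, EuclideanSpace.inner_single_left]

lemma inner_unnormalizedW_left (X : Finset (Fin N)) (v : QS N) :
    inner ℂ (unnormalizedW X) v = ∑ j ∈ X, v (eConf j) := by
  simp [unnormalizedW, inner_ket_left]

lemma nOp_apply (j : Fin N) (ψ : QS N) (s : Cfg N) :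
    nOp j ψ s = if s j = 1 then ψ s else 0 := by
  show (if s j = 1 then (if Function.update s j 0 j = 0
      then ψ (Function.update (Function.update s j 0) j 1) else 0) else 0) = _
  split_ifs with h
  · rw [Function.update_idem, ← h, Function.update_eq_self]
  · simp_all
  · rfl

lemma inner_unnormalizedW_nOp_sub_Wst {X : Finset (Fin N)} {ℓ r : Fin N} (hℓ : ℓ ∈ X)
    (hr : r ∉ X) :
    inner ℂ (unnormalizedW X) ((nOp ℓ - nOp r) (Wst N)) = (Real.sqrt N : ℂ)⁻¹ := by
  have hn : ∀ j k : Fin N, nOp k (Wst N) (eConf j) = if k = j then (Real.sqrt N : ℂ)⁻¹ else 0 :=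
    fun j k => by simp [nOp_apply, eConf_apply_eq_one_iff, Wst_apply]
  simp only [inner_unnormalizedW_left, LinearMap.sub_apply, WithLp.ofLp_sub, Pi.sub_apply, hn,
    Finset.sum_sub_distrib, Finset.sum_ite_eq, if_pos hℓ, if_neg hr, sub_zero]

/-- `g ψ s` only reads `ψ` on the configurations that agree with `s` off `X`. -/
theorem SupportedOn.apply_eq_mul_of_merge {X : Finset (Fin N)} {g : QS N →ₗ[ℂ] QS N}
    (hg : SupportedOn X g) {ψ φ : QS N} {s t : Cfg N} (hst : ∀ i ∈ X, s i = t i) (c : ℂ)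
    (h : ∀ x, ψ (mergeCfg X x fun i => s i) = c * φ (mergeCfg X x fun i => t i)) :
    g ψ s = c * g φ t := by
  obtain ⟨gX, hgX⟩ := hg
  have hψ : (WithLp.toLp 2 fun x => ψ (mergeCfg X x fun i => s i) : QSOn X)
      = c • WithLp.toLp 2 fun x => φ (mergeCfg X x fun i => t i) := by
    ext x; exact h x
  have hrestr : (fun i : ↥X => s i) = fun i : ↥X => t i := funext fun i => hst i.1 i.2
  rw [hgX ψ s, hgX φ t, hψ, map_smul, hrestr]
  rfl

lemma inner_unnormalizedW_apply_Wst_of_supportedOn {X : Finset (Fin N)} {A : QS N →ₗ[ℂ] QS N}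
    (hA : SupportedOn X A) :
    inner ℂ (unnormalizedW X) (A (Wst N))
      = (Real.sqrt N : ℂ)⁻¹ * inner ℂ (unnormalizedW X) (A (unnormalizedW X)) := by
  rw [inner_unnormalizedW_left, inner_unnormalizedW_left, Finset.mul_sum]
  refine Finset.sum_congr rfl fun j hj => hA.apply_eq_mul_of_merge (fun _ _ => rfl) _ fun x => ?_
  have hvanish : ∀ k ∉ X, mergeCfg X x (fun i => eConf j i) k = 0 := fun k hk => by
    rw [mergeCfg_apply_of_notMem X _ _ hk]
    simp [eConf, show k ≠ j by rintro rfl; exact hk hj]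
  rw [Wst_apply, unnormalizedW_apply]
  simp only [exists_mem_eq_eConf_iff hvanish]

lemma inner_unnormalizedW_apply_Wst_of_supportedOn_disjoint {X Y : Finset (Fin N)}
    {B : QS N →ₗ[ℂ] QS N} (hB : SupportedOn Y B) (hXY : Disjoint X Y) :
    inner ℂ (unnormalizedW X) (B (Wst N))
      = X.card * ((Real.sqrt N : ℂ)⁻¹ * inner ℂ (zeroKet N) (B (zeroKet N))) := by
  rw [inner_unnormalizedW_left, zeroKet, inner_ket_left, ← nsmul_eq_mul, ← Finset.sum_const]
  refine Finset.sum_congr rfl fun j hj => ?_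
  have hjY : j ∉ Y := Finset.disjoint_left.1 hXY hj
  have hzero : ∀ i ∈ Y, eConf j i = 0 := fun i hi => by
    simp [eConf, show i ≠ j by rintro rfl; exact hjY hi]
  refine hB.apply_eq_mul_of_merge hzero _ fun x => ?_
  have hone : mergeCfg Y x (fun i => eConf j i) j = 1 := by
    rw [mergeCfg_apply_of_notMem Y _ _ hjY, eConf_apply_eq_one_iff]
  rw [Wst_apply, ket_apply]
  congr 1
  refine if_congr ?_ rfl rfl
  rw [exists_eq_eConf_iff_of_apply_eq_one hone, mergeCfg_eq_iff, mergeCfg_eq_iff]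
  simp only [and_true]
  exact iff_of_eq (congrArg (x = ·) (funext fun i => hzero i i.2))

theorem no_hermitian_boundary_action_for_HImHop_general (N : ℕ)
    (Xl Xr : Finset (Fin N)) (hdisj : Disjoint Xl Xr)
    (ℓ r : Fin N) (hl : ℓ ∈ Xl) (hr : r ∈ Xr) :
    ¬ ∃ A B : QS N →ₗ[ℂ] QS N,
        IsSelfAdjoint A ∧ SupportedOn Xl A ∧ IsSelfAdjoint B ∧ SupportedOn Xr B ∧
        ((Complex.I / 2) • (nOp ℓ - nOp r)) (Wst N) = (A + B) (Wst N) := by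
  rintro ⟨A, B, hA, hAXl, hB, hBXr, heq⟩
  have hpair := congrArg (inner ℂ (unnormalizedW Xl)) heq
  rw [LinearMap.smul_apply, inner_smul_right,
    inner_unnormalizedW_nOp_sub_Wst hl (Finset.disjoint_right.1 hdisj hr), LinearMap.add_apply,
    inner_add_right, inner_unnormalizedW_apply_Wst_of_supportedOn hAXl,
    inner_unnormalizedW_apply_Wst_of_supportedOn_disjoint hBXr hdisj] at hpair
  have hAreal := ((LinearMap.isSymmetric_iff_isSelfAdjoint A).2 hA).im_inner_self_apply
    (unnormalizedW Xl)
  have hBreal := ((LinearMap.isSymmetric_iff_isSelfAdjoint B).2 hB).im_inner_self_apply (zeroKet N)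
  have him := congrArg Complex.im hpair
  simp only [RCLike.im_to_complex] at hAreal hBreal
  simp [hAreal, hBreal] at him
  exact ℓ.pos.ne' him

/-- For disjoint boundary regions `X_ℓ ∋ ℓ` and `X_r ∋ r` (`ℓ ≠ r`), there do
NOT exist self-adjoint operators `A` supported on `X_ℓ` and `B` supported on `X_r` with
`(i/2)(n_ℓ − n_r)|W⟩ = (A + B)|W⟩`. -/
theorem no_hermitian_boundary_action_for_HImHop (N : ℕ) (hN : 2 ≤ N)
    (Xl Xr : Finset (Fin N)) (hdisj : Disjoint Xl Xr)
    (ℓ r : Fin N) (hl : ℓ ∈ Xl) (hr : r ∈ Xr) (hlr : ℓ ≠ r) :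
    ¬ ∃ A B : QS N →ₗ[ℂ] QS N,
        IsSelfAdjoint A ∧ SupportedOn Xl A ∧ IsSelfAdjoint B ∧ SupportedOn Xr B ∧
        ((Complex.I / 2) • (nOp ℓ - nOp r)) (Wst N) = (A + B) (Wst N) :=
  no_hermitian_boundary_action_for_HImHop_general N Xl Xr hdisj ℓ r hl hr

end
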